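/- arXiv:1803.11047 — 5 statements merged into one kernel-verified Lean document; each statement's English description precedes it below -/
import Mathlib

section
/- Let K be a simplicial complex on Fin m. Then the moment-angle complex Z_K is the union of the cells κ(L,I) over all pairs of disjoint finsets I, L of Fin m with I ∈ K; moreover these cells are pairwise disjoint: if (I, L) ≠ (I', L') are two such pairs then κ(L,I) ∩ κ(L',I') = ∅. In other words, the open cells κ(L,I) with I ∈ K and L ∩ I = ∅ partition Z_K. -/
/-- The open cell `κ(L, I)` of the moment-angle complex inside `(D²)^m`:
`‖z i‖ < 1` for `i ∈ I`, `‖z i‖ = 1` and `z i ≠ 1` for `i ∈ L`, and `z i = 1`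
for `i ∉ I ∪ L`. -/
def cell {m : ℕ} (L I : Finset (Fin m)) : Set (Fin m → ℂ) :=
  {z | (∀ i ∈ I, ‖z i‖ < 1) ∧ (∀ i ∈ L, ‖z i‖ = 1 ∧ z i ≠ 1) ∧ ∀ i, i ∉ I ∪ L → z i = 1}

lemma cell_mem_I {m : ℕ} {L I : Finset (Fin m)} {z : Fin m → ℂ} (hz : z ∈ cell L I)
    (i : Fin m) : i ∈ I ↔ ‖z i‖ < 1 := by
  obtain ⟨h1, h2, h3⟩ := hz
  constructor
  · exact h1 i
  · intro h
    by_contra hi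
    by_cases hl : i ∈ L
    · exact absurd (h2 i hl).1 (ne_of_lt h)
    · have := h3 i (by simp [hi, hl])
      rw [this] at h; norm_num at h

lemma cell_mem_L {m : ℕ} {L I : Finset (Fin m)} {z : Fin m → ℂ} (hz : z ∈ cell L I)
    (i : Fin m) : i ∈ L ↔ (‖z i‖ = 1 ∧ z i ≠ 1) := by
  obtain ⟨h1, h2, h3⟩ := hz
  constructor
  · exact h2 i
  · rintro ⟨hn, hne⟩
    by_contra hl
    by_cases hi : i ∈ I
    · exact absurd hn (ne_of_lt (h1 i hi))
    · exact hne (h3 i (by simp [hi, hl]))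

/-- The moment-angle complex `Z_K` of a simplicial complex `K` on `Fin m`
is the union of the cells `κ(L, I)` over all pairs of disjoint finsets `I, L` with
`I ∈ K`, and distinct such cells are disjoint: the cells partition `Z_K`. -/
theorem stmt_4 {m : ℕ} (K : Set (Finset (Fin m)))
    (hK : ∀ σ ∈ K, ∀ τ ⊆ σ, τ ∈ K) :
    ({z : Fin m → ℂ | (∀ i, ‖z i‖ ≤ 1) ∧ ∃ I ∈ K, ∀ i ∉ I, ‖z i‖ = 1}
      = {z : Fin m → ℂ | ∃ I L : Finset (Fin m), I ∈ K ∧ I ∩ L = ∅ ∧ z ∈ cell L I}) ∧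
    ∀ I L I' L' : Finset (Fin m), I ∈ K → I' ∈ K → I ∩ L = ∅ → I' ∩ L' = ∅ →
      (I, L) ≠ (I', L') → cell L I ∩ cell L' I' = ∅ := by
  constructor
  · ext z
    simp only [Set.mem_setOf_eq]
    constructor
    · rintro ⟨hle, I, hI, hout⟩
      refine ⟨I.filter (fun i => ‖z i‖ < 1),
        Finset.univ.filter (fun i => ‖z i‖ = 1 ∧ z i ≠ 1),
        hK I hI _ (Finset.filter_subset _ _), ?_, ?_, ?_, ?_⟩
      · ext i; simp only [Finset.mem_inter, Finset.mem_filter, Finset.mem_univ,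
          Finset.notMem_empty, iff_false, true_and]
        rintro ⟨⟨-, h1⟩, h2, -⟩
        exact absurd h2 (ne_of_lt h1)
      · intro i hi; exact (Finset.mem_filter.mp hi).2
      · intro i hi; exact (Finset.mem_filter.mp hi).2
      · intro i hi
        simp only [Finset.mem_union, Finset.mem_filter, Finset.mem_univ, true_and,
          not_or, not_and] at hi
        obtain ⟨h1, h2⟩ := hi
        have hn1 : ‖z i‖ = 1 := by
          by_cases hiI : i ∈ I
          · exact le_antisymm (hle i) (not_lt.mp (fun h => h1 hiI h))
          · exact hout i hiI
        by_contra hne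
        exact (h2 hn1) hne
    · rintro ⟨I, L, hI, -, h1, h2, h3⟩
      refine ⟨?_, I, hI, ?_⟩
      · intro i
        by_cases hiI : i ∈ I
        · exact le_of_lt (h1 i hiI)
        by_cases hiL : i ∈ L
        · exact le_of_eq (h2 i hiL).1
        · rw [h3 i (by simp [hiI, hiL])]; norm_num
      · intro i hiI
        by_cases hiL : i ∈ L
        · exact (h2 i hiL).1
        · rw [h3 i (by simp [hiI, hiL])]; norm_num
  · intro I L I' L' _ _ _ _ hne
    rw [Set.eq_empty_iff_forall_notMem]
    rintro z ⟨hz, hz'⟩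
    apply hne
    have hI : I = I' := by
      ext i; rw [cell_mem_I hz, cell_mem_I hz']
    have hL : L = L' := by
      ext i; rw [cell_mem_L hz, cell_mem_L hz']
    rw [hI, hL]
end

section
/- Let X be a commutative topological monoid (a commutative monoid with continuous multiplication), A a submonoid of X, K a simplicial complex on Fin p, L a simplicial complex on Fin q, and f : Fin p → Fin q a simplicial map from K to L, meaning σ.image f ∈ L for every σ ∈ K. Define Φ : (Fin p → X) → (Fin q → X) by Φ(x) j = ∏_{i ∈ Finset.univ.filter (fun i => f i = j)} x i. Then Φ is continuous and maps the polyhedral product (X,A)^K into the polyhedral product (X,A)^L. -/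
/-- For a commutative topological monoid `X`, a submonoid `A`, and a
simplicial map `f` from a simplicial complex `K` on `Fin p` to a simplicial complex
`L` on `Fin q`, the map `Φ(x) j = ∏_{i : f i = j} x i` is continuous and maps the
polyhedral product `(X,A)^K` into the polyhedral product `(X,A)^L`. -/
theorem stmt_7 {X : Type*} [CommMonoid X] [TopologicalSpace X] [ContinuousMul X]
    (A : Submonoid X) {p q : ℕ}
    (K : Set (Finset (Fin p))) (L : Set (Finset (Fin q)))
    (hK : ∀ σ ∈ K, ∀ τ ⊆ σ, τ ∈ K) (hL : ∀ σ ∈ L, ∀ τ ⊆ σ, τ ∈ L)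
    (f : Fin p → Fin q) (hf : ∀ σ ∈ K, σ.image f ∈ L)
    (Φ : (Fin p → X) → (Fin q → X))
    (hΦ : Φ = fun x j => ∏ i ∈ Finset.univ.filter (fun i => f i = j), x i) :
    Continuous Φ ∧
    ∀ x ∈ {x : Fin p → X | ∃ I ∈ K, ∀ i ∉ I, x i ∈ A},
      Φ x ∈ {y : Fin q → X | ∃ J ∈ L, ∀ j ∉ J, y j ∈ A} := by
  subst hΦ
  constructor
  · exact continuous_pi fun j => continuous_finset_prod _ fun i _ => continuous_apply i
  · rintro x ⟨I, hI, hx⟩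
    refine ⟨I.image f, hf I hI, fun j hj => ?_⟩
    exact Submonoid.prod_mem A fun i hi => by
      simp only [Finset.mem_filter] at hi
      exact hx i fun h => hj (hi.2 ▸ Finset.mem_image_of_mem f h)
end

section
/- Let X be a topological space, A ⊆ X a subset, a ∈ A a basepoint, K a simplicial complex on Fin m, and J a finset of Fin m. Regard the full subcomplex K_J as a simplicial complex on the subtype ↥J (its simplices are exactly the σ ∈ K with σ ⊆ J), and let (X,A)^{K_J} ⊆ (↥J → X) be the corresponding polyhedral product. Let r : (Fin m → X) → (↥J → X) be the restriction map r(x) = fun i => x ↑i, and let e : (↥J → X) → (Fin m → X) be the extension by the basepoint: e(w) i = w i if i ∈ J, and e(w) i = a if i ∉ J. Then r and e are continuous, r maps (X,A)^K into (X,A)^{K_J}, e maps (X,A)^{K_J} into (X,A)^K, and r ∘ e is the identity on ↥J → X. In particular, the polyhedral product over a full subcomplex is a retract of (X,A)^K. -/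
/-- For a pair `(X, A)` with basepoint `a ∈ A`, a simplicial complex `K`
on `Fin m` and a finset `J`, regard the full subcomplex `K_J` as a simplicial complex
on the subtype `↥J` (its simplices are the `σ ∈ K` with `σ ⊆ J`). The restriction map
`r` and the extension-by-basepoint map `e` are continuous, `r` maps `(X,A)^K` into
`(X,A)^{K_J}`, `e` maps `(X,A)^{K_J}` into `(X,A)^K`, and `r ∘ e = id`; hence the
polyhedral product over a full subcomplex is a retract of `(X,A)^K`. -/
theorem stmt_8 {X : Type*} [TopologicalSpace X] (A : Set X) (a : X) (ha : a ∈ A)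
    {m : ℕ} (K : Set (Finset (Fin m)))
    (hK : ∀ σ ∈ K, ∀ τ ⊆ σ, τ ∈ K)
    (J : Finset (Fin m))
    (KJ : Set (Finset {i // i ∈ J}))
    (hKJ : KJ = {τ : Finset {i // i ∈ J} | τ.image Subtype.val ∈ K})
    (r : (Fin m → X) → ({i // i ∈ J} → X))
    (hr : r = fun x i => x ↑i)
    (e : ({i // i ∈ J} → X) → (Fin m → X))
    (he : e = fun w i => if h : i ∈ J then w ⟨i, h⟩ else a) :
    Continuous r ∧ Continuous e ∧
    (∀ x ∈ {x : Fin m → X | ∃ I ∈ K, ∀ i ∉ I, x i ∈ A},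
        r x ∈ {w : {i // i ∈ J} → X | ∃ I ∈ KJ, ∀ i ∉ I, w i ∈ A}) ∧
    (∀ w ∈ {w : {i // i ∈ J} → X | ∃ I ∈ KJ, ∀ i ∉ I, w i ∈ A},
        e w ∈ {x : Fin m → X | ∃ I ∈ K, ∀ i ∉ I, x i ∈ A}) ∧
    (∀ w : {i // i ∈ J} → X, r (e w) = w) := by
  subst hKJ hr he
  refine ⟨?_, ?_, ?_, ?_, ?_⟩
  · exact continuous_pi fun i => continuous_apply _
  · refine continuous_pi fun i => ?_
    by_cases h : i ∈ J
    · simpa [h] using continuous_apply (⟨i, h⟩ : {i // i ∈ J})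
    · simpa [h] using continuous_const
  · rintro x ⟨I, hI, hx⟩
    refine ⟨I.subtype (· ∈ J), ?_, ?_⟩
    · refine hK I hI _ ?_
      intro i hi
      simp only [Finset.mem_image, Finset.mem_subtype] at hi
      obtain ⟨j, hj, rfl⟩ := hi
      exact hj
    · intro i hi
      refine hx ↑i fun h => hi ?_
      simp [Finset.mem_subtype, h]
  · rintro w ⟨τ, hτ, hw⟩
    refine ⟨τ.image Subtype.val, hτ, ?_⟩
    intro i hi
    by_cases h : i ∈ J
    · simp only [dif_pos h]
      refine hw ⟨i, h⟩ fun hmem => hi ?_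
      exact Finset.mem_image.mpr ⟨⟨i, h⟩, hmem, rfl⟩
    · simpa [h] using ha
  · intro w
    funext i
    simp [i.2]
end

section
/- Let m be a natural number and let I ⊆ J be finsets of Fin m. Then the intersection stab(I) ⊓ stab(J) of the stabilizer subgroups in Equiv.Perm (Fin m) is isomorphic as a group (via a MulEquiv) to the product Equiv.Perm ↥I × Equiv.Perm ↥(J \ I) × Equiv.Perm ↥(Jᶜ), where J \ I is the finset difference and Jᶜ is the complement finset of J in Fin m. (This is the identity of Young subgroups Σ_a × Σ_{m−a} ∩ Σ_b × Σ_{m−b} = Σ_a × Σ_{b−a} × Σ_{m−b} for a = |I| ≤ b = |J| ≤ m.) -/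
/-- The stabilizer `stab(J) = {g | J.image g = J}` of a finset `J` in the symmetric
group `Equiv.Perm α`. -/
def stab {α : Type*} [DecidableEq α] (J : Finset α) : Subgroup (Equiv.Perm α) where
  carrier := {g | J.image ⇑g = J}
  one_mem' := by simp
  mul_mem' := by
    intro g h hg hh
    simp only [Set.mem_setOf_eq] at *
    rw [Equiv.Perm.coe_mul, ← Finset.image_image, hh, hg]
  inv_mem' := by
    intro g hg
    simp only [Set.mem_setOf_eq] at *
    conv_lhs => rw [← hg]
    rw [Finset.image_image]
    simp [Function.comp_def]

/-!
An element of `stab I ⊓ stab J` permutes each block of the partition `I`, `J \ I`, `Jᶜ` of the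
ground set, so restricting to the blocks is a homomorphism into the product of their symmetric
groups. It is injective because the blocks cover the ground set. It is surjective because, as
`I ⊆ J`, each block lies inside or outside each of `I` and `J`, so a permutation of a single
block, extended by the identity, lies in both stabilizers; the three extensions multiply to a
preimage.
-/

open Equiv Equiv.Perm Finset

section

variable {α : Type*} [DecidableEq α]

theorem mem_stab_iff {K : Finset α} {g : Perm α} : g ∈ stab K ↔ ∀ x, g x ∈ K ↔ x ∈ K := by
  change K.image g = K ↔ _
  constructor
  · intro h x
    conv_lhs => rw [← h]
    exact g.injective.mem_finset_image
  · intro h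
    ext y
    rw [mem_image]
    constructor
    · rintro ⟨x, hx, rfl⟩
      exact (h x).2 hx
    · intro hy
      exact ⟨g.symm y, (h _).1 (by simpa using hy), g.apply_symm_apply y⟩

theorem stab_compl [Fintype α] (K : Finset α) : stab Kᶜ = stab K := by
  ext g
  simp only [mem_stab_iff, mem_compl, not_iff_not]

theorem inf_le_stab_sdiff (I J : Finset α) : stab I ⊓ stab J ≤ stab (J \ I) := by
  intro g hg
  rw [Subgroup.mem_inf, mem_stab_iff, mem_stab_iff] at hg
  obtain ⟨hI, hJ⟩ := hg
  rw [mem_stab_iff]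
  intro x
  rw [mem_sdiff, mem_sdiff, hI, hJ]

def stabRestrict (K : Finset α) : stab K →* Perm K where
  toFun g := g.1.subtypePerm (mem_stab_iff.1 g.2)
  map_one' := rfl
  map_mul' _ _ := rfl

theorem stabRestrict_eq_one_iff {K : Finset α} (g : stab K) :
    stabRestrict K g = 1 ↔ ∀ x ∈ K, g.1 x = x := by
  simp only [Perm.ext_iff, Subtype.ext_iff, Subtype.forall]
  rfl

theorem ofSubtype_mem_stab {K L : Finset α} (a : Perm K) (h : K ⊆ L ∨ Disjoint K L) :
    ofSubtype a ∈ stab L := by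
  rw [mem_stab_iff]
  intro x
  by_cases hx : x ∈ K
  · have hax := (a ⟨x, hx⟩).2
    rw [ofSubtype_apply_of_mem a hx]
    rcases h with h | h
    · simp [h hx, h hax]
    · simp [disjoint_left.1 h hx, disjoint_left.1 h hax]
  · rw [ofSubtype_apply_of_not_mem a hx]

theorem stabRestrict_ofSubtype_self {K : Finset α} (a : Perm K) (ha : ofSubtype a ∈ stab K) :
    stabRestrict K ⟨ofSubtype a, ha⟩ = a :=
  subtypePerm_ofSubtype a

theorem stabRestrict_ofSubtype_of_disjoint {K L : Finset α} (a : Perm K) (hKL : Disjoint K L)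
    (ha : ofSubtype a ∈ stab L) : stabRestrict L ⟨ofSubtype a, ha⟩ = 1 :=
  (stabRestrict_eq_one_iff _).2 fun _ hx => ofSubtype_apply_of_not_mem a (disjoint_right.1 hKL hx)

variable [Fintype α]

@[simps]
def youngRestrict (I J : Finset α) :
    ↥(stab I ⊓ stab J) →* Perm I × Perm ↥(J \ I) × Perm ↥Jᶜ where
  toFun g := (stabRestrict I ⟨g, g.2.1⟩, stabRestrict (J \ I) ⟨g, inf_le_stab_sdiff I J g.2⟩,
    stabRestrict Jᶜ ⟨g, (stab_compl J).ge g.2.2⟩)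
  map_one' := rfl
  map_mul' _ _ := rfl

theorem youngRestrict_injective (I J : Finset α) : Function.Injective (youngRestrict I J) := by
  refine (injective_iff_map_eq_one _).2 fun g hg => ?_
  simp only [youngRestrict_apply, Prod.mk_eq_one, stabRestrict_eq_one_iff] at hg
  obtain ⟨hI, hD, hC⟩ := hg
  ext x
  by_cases hxI : x ∈ I
  · exact hI x hxI
  by_cases hxJ : x ∈ J
  · exact hD x (mem_sdiff.2 ⟨hxJ, hxI⟩)
  · exact hC x (mem_compl.2 hxJ)

theorem youngRestrict_surjective {I J : Finset α} (hIJ : I ⊆ J) :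
    Function.Surjective (youngRestrict I J) := by
  rintro ⟨a, b, c⟩
  have hIC : Disjoint I Jᶜ := hIJ.disjoint_compl_right
  have hDC : Disjoint (J \ I) Jᶜ := sdiff_le.disjoint_compl_right
  let lift {K : Finset α} (p : Perm K) (hI : K ⊆ I ∨ Disjoint K I) (hJ : K ⊆ J ∨ Disjoint K J) :
      ↥(stab I ⊓ stab J) := ⟨ofSubtype p, ofSubtype_mem_stab p hI, ofSubtype_mem_stab p hJ⟩
  refine ⟨lift a (.inl subset_rfl) (.inl hIJ) * lift b (.inr sdiff_disjoint) (.inl sdiff_subset) *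
    lift c (.inr hIC.symm) (.inr disjoint_compl_left), ?_⟩
  simp only [map_mul, youngRestrict_apply, Prod.mk_mul_mk, lift, stabRestrict_ofSubtype_self,
    stabRestrict_ofSubtype_of_disjoint _ disjoint_sdiff,
    stabRestrict_ofSubtype_of_disjoint _ sdiff_disjoint,
    stabRestrict_ofSubtype_of_disjoint _ hIC, stabRestrict_ofSubtype_of_disjoint _ hIC.symm,
    stabRestrict_ofSubtype_of_disjoint _ hDC, stabRestrict_ofSubtype_of_disjoint _ hDC.symm,
    mul_one, one_mul]

end

/-- For finsets `I ⊆ J` of `Fin m`, the intersection of the stabilizers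
`stab(I) ⊓ stab(J)` in `Equiv.Perm (Fin m)` is isomorphic, as a group, to
`Perm ↥I × Perm ↥(J \ I) × Perm ↥(Jᶜ)` (the Young subgroup identity
`Σ_a × Σ_{m-a} ∩ Σ_b × Σ_{m-b} = Σ_a × Σ_{b-a} × Σ_{m-b}`). -/
theorem stmt_9 {m : ℕ} (I J : Finset (Fin m)) (hIJ : I ⊆ J) :
    Nonempty ((↥(stab I ⊓ stab J)) ≃*
      Equiv.Perm {x // x ∈ I} × Equiv.Perm {x // x ∈ J \ I} × Equiv.Perm {x // x ∈ Jᶜ}) :=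
  ⟨MulEquiv.ofBijective _ ⟨youngRestrict_injective I J, youngRestrict_surjective hIJ⟩⟩
end

section
/- Fix natural numbers s ≥ 1, r, and m with r + 1 ≤ m. Let J_1, …, J_s be finsets of Fin m satisfying |J_1| + ⋯ + |J_s| = r + 1. Then there exist a permutation g ∈ Equiv.Perm (Fin m) and finsets J'_1, …, J'_s of Fin m such that J'_t.image g = J_t for every t and every element x of every J'_t satisfies (x : ℕ) < r + 1. (This is the complete surjectivity of the consistent sequence of joins of skeleta of simplices: every collection of r + 1 vertices of the m-th complex is, up to the symmetric group action, the image of a collection of vertices supported on the first r + 1 coordinates.) -/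
open Finset

theorem Equiv.Perm.exists_map_finset_subset {β : Type*} (s t : Finset β) (h : #s ≤ #t) :
    ∃ σ : Equiv.Perm β, s.map σ.toEmbedding ⊆ t := by
  obtain ⟨t', ht't, ht'⟩ := exists_subset_card_eq h
  obtain ⟨σ, hσ⟩ := Equiv.Perm.exists_map_finset_eq s t' ht'.symm
  exact ⟨σ, hσ ▸ ht't⟩

theorem Equiv.Perm.exists_forall_map_finset_subset_of_sum_card_le {ι β : Type*} [Fintype ι]
    [DecidableEq β] (J : ι → Finset β) (t : Finset β) (h : ∑ i, #(J i) ≤ #t) :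
    ∃ σ : Equiv.Perm β, ∀ i, (J i).map σ.toEmbedding ⊆ t := by
  obtain ⟨σ, hσ⟩ := exists_map_finset_subset (univ.biUnion J) t (card_biUnion_le.trans h)
  exact ⟨σ, fun i => (map_subset_map.2 (subset_biUnion_of_mem J (mem_univ i))).trans hσ⟩

theorem stmt_13_general {s r m : ℕ} (hrm : r + 1 ≤ m)
    (J : Fin s → Finset (Fin m))
    (hcard : ∑ t : Fin s, (J t).card = r + 1) :
    ∃ (g : Equiv.Perm (Fin m)) (J' : Fin s → Finset (Fin m)),
      (∀ t, (J' t).image ⇑g = J t) ∧ ∀ t, ∀ x ∈ J' t, (x : ℕ) < r + 1 := by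
  have hT : ∑ t, #(J t) ≤ #{x : Fin m | (x : ℕ) < r + 1} := by
    rw [Fin.card_filter_val_lt, hcard, min_eq_right hrm]
  obtain ⟨σ, hσ⟩ := Equiv.Perm.exists_forall_map_finset_subset_of_sum_card_le J _ hT
  refine ⟨σ.symm, fun t => (J t).map σ.toEmbedding, fun t => ?_, fun t x hx => ?_⟩
  · simp [map_eq_image, image_image]
  · simpa using hσ t hx

/-- For `s ≥ 1`, `r + 1 ≤ m` and finsets `J_1, …, J_s` of `Fin m` with
`|J_1| + ⋯ + |J_s| = r + 1`, there exist a permutation `g ∈ Perm (Fin m)` and finsets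
`J'_1, …, J'_s` with `J'_t.image g = J_t` for every `t` and every element of every
`J'_t` lying among the first `r + 1` coordinates. (Complete surjectivity of the
consistent sequence of joins of skeleta of simplices.) -/
theorem stmt_13 {s r m : ℕ} (hs : 1 ≤ s) (hrm : r + 1 ≤ m)
    (J : Fin s → Finset (Fin m))
    (hcard : ∑ t : Fin s, (J t).card = r + 1) :
    ∃ (g : Equiv.Perm (Fin m)) (J' : Fin s → Finset (Fin m)),
      (∀ t, (J' t).image ⇑g = J t) ∧ ∀ t, ∀ x ∈ J' t, (x : ℕ) < r + 1 :=
  stmt_13_general hrm J hcard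
end
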